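/- arXiv:1908.08621 — 3 statements merged into one kernel-verified Lean document; each statement's English description precedes it below -/
import Mathlib

section
/- There exists l₀ ∈ ℕ such that for every l ≥ l₀ and every irreducible finite-dimensional complex representation V of G, the multiplicity of V in the l-fold tensor power U^{⊗l} is nonzero; equivalently, (1/|G|)·∑_{g∈G} conj(χ_V(g))·(χ_U(g))^l ≠ 0, where χ_V and χ_U denote the characters of V and U. -/
open scoped Matrix ComplexConjugate

/-- `V` is a (genuine) complex matrix representation of `G`. -/
def IsRep {G : Type*} [Group G] {n : ℕ} (V : G → Matrix (Fin n) (Fin n) ℂ) : Prop :=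
  V 1 = 1 ∧ ∀ g h, V (g * h) = V g * V h

/-- The representation `V` is irreducible: the representation space `ℂⁿ` is nonzero and
the only subspaces invariant under all the `V g` are `0` and `ℂⁿ`. -/
def IsIrred {G : Type*} [Group G] {n : ℕ} (V : G → Matrix (Fin n) (Fin n) ℂ) : Prop :=
  0 < n ∧ ∀ p : Submodule ℂ (Fin n → ℂ),
    (∀ g, ∀ x ∈ p, (V g).mulVec x ∈ p) → p = ⊥ ∨ p = ⊤

/-!
In the character sum the term of the identity is `n * d ^ l`, and every other term has norm at
most `n * ‖χ_U g‖ ^ l`: the eigenvalues of `V g` are roots of unity, so `‖χ_V g‖ ≤ n`. For a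
unitary `d × d` matrix, Cauchy–Schwarz for the Frobenius inner product gives `‖tr A‖ ≤ d`, with
equality only when `A` is scalar; hence `‖χ_U g‖ < d` for `g ≠ 1`, and for large `l` the identity
term dominates the sum, uniformly in `V`.
-/

open scoped ComplexOrder
open Filter Topology Finset

section Representations

variable {G : Type*} [Group G] {n : ℕ} {V : G → Matrix (Fin n) (Fin n) ℂ}

def IsRep.toMonoidHom (hV : IsRep V) : G →* Matrix (Fin n) (Fin n) ℂ where
  toFun := V
  map_one' := hV.1
  map_mul' := hV.2

theorem IsRep.trace_one (hV : IsRep V) : (V 1).trace = n := by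
  simp [hV.1]

theorem IsRep.pow_card_eq_one [Fintype G] (hV : IsRep V) (g : G) :
    V g ^ Fintype.card G = 1 := by
  change hV.toMonoidHom g ^ _ = 1
  rw [← map_pow, _root_.pow_card_eq_one, map_one]

end Representations

namespace Matrix

variable {ι : Type*} [Fintype ι] [DecidableEq ι]

theorem norm_trace_le_card_of_pow_eq_one {A : Matrix ι ι ℂ} {k : ℕ} (hk : k ≠ 0)
    (hA : A ^ k = 1) : ‖A.trace‖ ≤ Fintype.card ι := by
  cases isEmpty_or_nonempty ι
  · simp [trace]
  have norm_root : ∀ μ ∈ A.charpoly.roots, ‖μ‖ = 1 := by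
    intro μ hμ
    have hμk : μ ^ k ∈ spectrum ℂ (A ^ k) := spectrum.pow_mem_pow A k
      (mem_spectrum_iff_isRoot_charpoly.2 (Polynomial.isRoot_of_mem_roots hμ))
    rw [hA, spectrum.one_eq, Set.mem_singleton_iff] at hμk
    exact Complex.norm_eq_one_of_pow_eq_one hμk hk
  calc ‖A.trace‖ = ‖A.charpoly.roots.sum‖ := by rw [trace_eq_sum_roots_charpoly]
    _ ≤ (A.charpoly.roots.map (‖·‖)).sum := norm_multiset_sum_le _
    _ = Multiset.card A.charpoly.roots := by simp [Multiset.map_congr rfl norm_root]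
    _ ≤ Fintype.card ι := by
      exact_mod_cast (Polynomial.card_roots' _).trans A.charpoly_natDegree_eq_dim.le

theorem norm_trace_lt_card_of_mem_unitary {A : Matrix ι ι ℂ} (hA : A ∈ unitary (Matrix ι ι ℂ))
    (hAs : ¬ ∃ c : ℂ, A = c • 1) : ‖A.trace‖ < Fintype.card ι := by
  let : NormedAddCommGroup (Matrix ι ι ℂ) := toMatrixNormedAddCommGroup 1 PosDef.one
  -- the Frobenius inner product `⟪X, Y⟫ = tr (Y * Xᴴ)`
  let : InnerProductSpace ℂ (Matrix ι ι ℂ) := toMatrixInnerProductSpace 1 PosSemidef.one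
  have inner_one : inner ℂ (1 : Matrix ι ι ℂ) A = A.trace := by
    change (A * 1 * 1ᴴ).trace = _
    simp
  have norm_sq : ∀ B ∈ unitary (Matrix ι ι ℂ), ‖B‖ ^ 2 = Fintype.card ι := by
    intro B hB
    rw [@norm_sq_eq_re_inner ℂ]
    change (B * 1 * Bᴴ).trace.re = _
    simp [← star_eq_conjTranspose, Unitary.mul_star_self_of_mem hB]
  have norm_mul_norm : ‖(1 : Matrix ι ι ℂ)‖ * ‖A‖ = Fintype.card ι := by
    rw [← sq_eq_sq₀ (by positivity) (by positivity), mul_pow, norm_sq 1 (one_mem _),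
      norm_sq A hA, sq]
  refine lt_of_le_of_ne (inner_one ▸ norm_mul_norm ▸ norm_inner_le_norm 1 A) fun heq => hAs ?_
  rcases ((norm_inner_eq_norm_tfae ℂ 1 A).out 0 2).1 (by rw [inner_one, heq, norm_mul_norm])
    with h | h
  · have := subsingleton_of_zero_eq_one h.symm
    exact ⟨0, Subsingleton.elim _ _⟩
  · exact h

end Matrix

theorem eventually_sum_mul_pow_ne_zero {α : Type*} [Fintype α] [DecidableEq α] {z : α → ℂ}
    (a : α) (hza : z a ≠ 0) (hz : ∀ x ≠ a, ‖z x‖ < ‖z a‖) :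
    ∀ᶠ l in atTop, ∀ w : α → ℂ, w a ≠ 0 → (∀ x, ‖w x‖ ≤ ‖w a‖) → ∑ x, w x * z x ^ l ≠ 0 := by
  have hza_pos : 0 < ‖z a‖ := norm_pos_iff.2 hza
  have ratios_tendsto :
      Tendsto (fun l => ∑ x ∈ univ.erase a, (‖z x‖ / ‖z a‖) ^ l) atTop (𝓝 0) := by
    simpa only [sum_const_zero] using tendsto_finsetSum _ fun x hx =>
      tendsto_pow_atTop_nhds_zero_of_lt_one (by positivity)
        ((div_lt_one hza_pos).2 (hz x (ne_of_mem_erase hx)))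
  filter_upwards [ratios_tendsto.eventually_lt_const one_pos] with l hl w hwa hw
  have tail_lt : ‖∑ x ∈ univ.erase a, w x * z x ^ l‖ < ‖w a * z a ^ l‖ :=
    calc ‖∑ x ∈ univ.erase a, w x * z x ^ l‖ ≤ ∑ x ∈ univ.erase a, ‖w a‖ * ‖z x‖ ^ l := by
          refine (norm_sum_le _ _).trans (sum_le_sum fun x _ => ?_)
          rw [norm_mul, norm_pow]
          gcongr
          exact hw x
      _ = ‖w a‖ * ‖z a‖ ^ l * ∑ x ∈ univ.erase a, (‖z x‖ / ‖z a‖) ^ l := by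
          rw [mul_sum]
          refine sum_congr rfl fun x _ => ?_
          rw [mul_assoc, div_pow, mul_div_cancel₀ _ (by positivity)]
      _ < ‖w a‖ * ‖z a‖ ^ l := by
          have : 0 < ‖w a‖ * ‖z a‖ ^ l := by positivity
          exact mul_lt_of_lt_one_right this hl
      _ = ‖w a * z a ^ l‖ := by rw [norm_mul, norm_pow]
  rw [← add_sum_erase _ _ (mem_univ a)]
  intro hsum
  rw [eq_neg_of_add_eq_zero_left hsum, norm_neg] at tail_lt
  exact lt_irrefl _ tail_lt

/-- There is an `l₀` such that for every `l ≥ l₀`, every irreducible complex representation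
of the finite group `G` occurs in `U^{⊗l}`; equivalently the character inner product
`(1/|G|) ∑_g conj(χ_V(g)) (χ_U(g))^l` is nonzero. -/
theorem exists_l0_forall_irrep_multiplicity_ne_zero
    {G : Type*} [Group G] [Fintype G]
    (d : ℕ) (hd : 2 ≤ d) (U : G → Matrix (Fin d) (Fin d) ℂ)
    (hU : IsRep U) (hUu : ∀ g, U g ∈ unitary (Matrix (Fin d) (Fin d) ℂ))
    (hUs : ∀ g : G, g ≠ 1 → ¬ ∃ c : ℂ, U g = c • (1 : Matrix (Fin d) (Fin d) ℂ)) :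
    ∃ l₀ : ℕ, ∀ l : ℕ, l₀ ≤ l →
      ∀ (n : ℕ) (V : G → Matrix (Fin n) (Fin n) ℂ), IsRep V → IsIrred V →
        (1 / (Fintype.card G : ℂ)) *
          ∑ g : G, conj ((V g).trace) * ((U g).trace) ^ l ≠ 0 := by
  classical
  obtain ⟨l₀, hl₀⟩ := eventually_atTop.1 <|
    eventually_sum_mul_pow_ne_zero (z := fun g => (U g).trace) 1 (by simp [hU.trace_one]; omega)
      fun g hg => by
        simpa [hU.trace_one] using Matrix.norm_trace_lt_card_of_mem_unitary (hUu g) (hUs g hg)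
  refine ⟨l₀, fun l hl n V hV hVirr => mul_ne_zero (by simp) (hl₀ l hl _ ?_ fun g => ?_)⟩
  · simpa [hV.trace_one] using hVirr.1.ne'
  · simpa [hV.trace_one] using
      Matrix.norm_trace_le_card_of_pow_eq_one Fintype.card_ne_zero (hV.pow_card_eq_one g)
end

section
/- There exists l₀ ∈ ℕ with the following property: for every 2-cocycle σ of G, every pair α, β of irreducible σ-projective unitary matrix representations of G, and every l ≥ l₀, the representation α is contained in the σ-projective unitary representation β ⊗ U^{⊗l} (the Kronecker product g ↦ β(g) ⊗ U^{⊗l}(g)). -/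
open scoped Matrix Kronecker

/-- A `2`-cocycle of `G` with values in the unit circle. -/
def IsCocycle {G : Type*} [Group G] (σ : G → G → ℂ) : Prop :=
  (∀ g h, ‖σ g h‖ = 1) ∧
  (∀ g h k, σ g h * σ (g * h) k = σ h k * σ g (h * k)) ∧
  (∀ g, σ g 1 = 1) ∧ (∀ g, σ 1 g = 1)

/-- A `σ`-projective unitary matrix representation of `G`. -/
def IsProjRep {G : Type*} [Group G] (σ : G → G → ℂ) {n : ℕ}
    (V : G → Matrix (Fin n) (Fin n) ℂ) : Prop :=
  (∀ g, V g ∈ unitary (Matrix (Fin n) (Fin n) ℂ)) ∧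
  ∀ g h, V g * V h = σ g h • V (g * h)

/-- The `l`-fold Kronecker tensor power of a matrix representation. -/
def tensorPow {G : Type*} {d : ℕ} (U : G → Matrix (Fin d) (Fin d) ℂ) (l : ℕ) (g : G) :
    Matrix (Fin l → Fin d) (Fin l → Fin d) ℂ :=
  Matrix.of fun v w => ∏ i, U g (v i) (w i)

/-- `V₁` is contained in `V₂`: there is an isometric intertwiner from the space of `V₁`
into the space of `V₂`. -/
def ContainedIn {G : Type*} {m₁ m₂ : Type*} [Fintype m₁] [Fintype m₂] [DecidableEq m₁]
    (V₁ : G → Matrix m₁ m₁ ℂ) (V₂ : G → Matrix m₂ m₂ ℂ) : Prop :=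
  ∃ W : Matrix m₂ m₁ ℂ, Wᴴ * W = 1 ∧ ∀ g, W * V₁ g = V₂ g * W

/-!
For `g ≠ 1` the matrix `U g` is unitary but not scalar, so `‖tr U(g)‖ < d`. Hence, for `l` large,
the character of `V = β ⊗ U^{⊗l}` is dominated by its value `n₂ dˡ` at the identity, and the
character inner product `∑_g tr V(g) · conj (tr α(g))` does not vanish. The twirl
`X ↦ ∑_g V(g) X α(g)*` maps into intertwiners, and the trace of the twirl, read off on matrix
units, is that inner product; so some twirl `T` is a nonzero intertwiner. By Schur's lemma `T*T` is
a positive scalar, and a rescaling of `T` is the required isometry.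
-/

open Filter Matrix
open scoped ComplexOrder

namespace Matrix

variable {R : Type*} [CommSemiring R] {m n p : Type*} (ι : Type*) [Fintype ι]

def kroneckerPow (A : Matrix m n R) : Matrix (ι → m) (ι → n) R :=
  of fun v w => ∏ i, A (v i) (w i)

variable {ι}

theorem kroneckerPow_mul [DecidableEq ι] [Fintype n] (A : Matrix m n R) (B : Matrix n p R) :
    kroneckerPow ι A * kroneckerPow ι B = kroneckerPow ι (A * B) := by
  ext v w
  simp only [kroneckerPow, mul_apply, of_apply, Fintype.prod_sum, Finset.prod_mul_distrib]

theorem kroneckerPow_one [DecidableEq m] : kroneckerPow ι (1 : Matrix m m R) = 1 := by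
  ext v w
  simp only [kroneckerPow, of_apply, one_apply, Finset.prod_ite_zero, Finset.prod_const_one,
    Finset.mem_univ, forall_const, funext_iff]

theorem conjTranspose_kroneckerPow [StarRing R] (A : Matrix m n R) :
    (kroneckerPow ι A)ᴴ = kroneckerPow ι Aᴴ := by
  ext v w
  simp only [kroneckerPow, conjTranspose_apply, of_apply, star_prod]

theorem kroneckerPow_mem_unitary [DecidableEq ι] [StarRing R] [Fintype m] [DecidableEq m]
    {A : Matrix m m R} (hA : A ∈ unitary (Matrix m m R)) :
    kroneckerPow ι A ∈ unitary (Matrix (ι → m) (ι → m) R) := by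
  simp only [Unitary.mem_iff, star_eq_conjTranspose, conjTranspose_kroneckerPow] at hA ⊢
  rw [kroneckerPow_mul, kroneckerPow_mul, hA.1, hA.2, kroneckerPow_one, and_self]

theorem trace_kroneckerPow [DecidableEq ι] [Fintype m] (A : Matrix m m R) :
    (kroneckerPow ι A).trace = A.trace ^ Fintype.card ι := by
  rw [← Finset.card_univ, ← Finset.prod_const]
  exact (Fintype.prod_sum fun _ j => A j j).symm

variable [Fintype n] [DecidableEq n]

theorem norm_trace_le_of_mem_unitary {𝕜 : Type*} [RCLike 𝕜] {A : Matrix n n 𝕜}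
    (hA : A ∈ unitary (Matrix n n 𝕜)) : ‖A.trace‖ ≤ Fintype.card n :=
  calc ‖A.trace‖ ≤ ∑ i, ‖A i i‖ := norm_sum_le _ _
    _ ≤ ∑ _i : n, 1 := Finset.sum_le_sum fun i _ => entry_norm_bound_of_unitary hA i i
    _ = Fintype.card n := by simp

theorem eq_one_of_mem_unitary_of_re_trace_eq {A : Matrix n n ℂ}
    (hA : A ∈ unitary (Matrix n n ℂ)) (h : A.trace.re = Fintype.card n) : A = 1 := by
  -- `tr ((A - 1)ᴴ (A - 1)) = 2 card n - 2 Re (tr A)`.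
  have hA' : Aᴴ * A = 1 := hA.1
  have : ((A - 1)ᴴ * (A - 1)).trace = 0 := by
    rw [conjTranspose_sub, conjTranspose_one, sub_mul, mul_sub, mul_sub, hA', mul_one, one_mul,
      trace_sub, trace_sub, trace_sub, trace_one, trace_conjTranspose]
    apply Complex.ext <;> simp [h]
  rw [← sub_eq_zero, ← trace_conjTranspose_mul_self_eq_zero_iff, this]

theorem norm_trace_lt_of_mem_unitary {A : Matrix n n ℂ} (hA : A ∈ unitary (Matrix n n ℂ))
    (hA_scalar : ¬ ∃ c : ℂ, A = c • 1) : ‖A.trace‖ < Fintype.card n := by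
  refine (norm_trace_le_of_mem_unitary hA).lt_of_ne fun h => hA_scalar ?_
  -- `a` rotates `tr A` onto the positive real axis, so `a • A` is unitary of trace `card n`.
  let a := Complex.exp (↑(-A.trace.arg) * Complex.I)
  have ha : a * A.trace = ‖A.trace‖ := by
    calc a * A.trace = a * (‖A.trace‖ * Complex.exp (A.trace.arg * Complex.I)) := by
          rw [Complex.norm_mul_exp_arg_mul_I]
      _ = ‖A.trace‖ := by
          rw [mul_left_comm, ← Complex.exp_add, Complex.ofReal_neg, neg_mul, neg_add_cancel,
            Complex.exp_zero, mul_one]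
  have ha_unit : a ∈ unitary ℂ := by
    rw [Unitary.mem_iff_star_mul_self, Complex.star_def, Complex.conj_mul',
      Complex.norm_exp_ofReal_mul_I, Complex.ofReal_one, one_pow]
  have : a • A = 1 := eq_one_of_mem_unitary_of_re_trace_eq
    (Unitary.smul_mem ⟨a, ha_unit⟩ hA) (by rw [trace_smul, smul_eq_mul, ha, h, Complex.ofReal_re])
  refine ⟨a⁻¹, ?_⟩
  rw [← this, smul_smul, inv_mul_cancel₀ (Complex.exp_ne_zero _), one_smul]

theorem mul_conjTranspose_eq_of_mul_eq [Fintype m] [DecidableEq m] {V : Matrix m m ℂ}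
    {W : Matrix n n ℂ} (hV : V ∈ unitary (Matrix m m ℂ)) (hW : W ∈ unitary (Matrix n n ℂ))
    {T : Matrix m n ℂ} (h : T * W = V * T) :
    T * Wᴴ = Vᴴ * T :=
  calc T * Wᴴ = Vᴴ * V * T * Wᴴ := by rw [show Vᴴ * V = 1 from hV.1, Matrix.one_mul]
    _ = Vᴴ * T * (W * Wᴴ) := by rw [Matrix.mul_assoc Vᴴ V, ← h]; simp only [Matrix.mul_assoc]
    _ = Vᴴ * T := by rw [show W * Wᴴ = 1 from hW.2, Matrix.mul_one]

end Matrix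

section TensorPower

variable {G : Type*} {d : ℕ} {U : G → Matrix (Fin d) (Fin d) ℂ}

theorem tensorPow_mem_unitary (hU : ∀ g, U g ∈ unitary (Matrix (Fin d) (Fin d) ℂ)) (l : ℕ)
    (g : G) : tensorPow U l g ∈ unitary (Matrix (Fin l → Fin d) (Fin l → Fin d) ℂ) :=
  kroneckerPow_mem_unitary (hU g)

theorem tensorPow_mul [Mul G] (hU : ∀ g h, U (g * h) = U g * U h) (l : ℕ) (g h : G) :
    tensorPow U l (g * h) = tensorPow U l g * tensorPow U l h :=
  (congrArg _ (hU g h)).trans (kroneckerPow_mul _ _).symm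

theorem trace_tensorPow (l : ℕ) (g : G) : (tensorPow U l g).trace = (U g).trace ^ l :=
  (trace_kroneckerPow (U g)).trans (by rw [Fintype.card_fin])

end TensorPower

theorem Fintype.sum_ne_zero_of_norm_le_inv_card_mul {ι E : Type*} [Fintype ι] [DecidableEq ι]
    [NormedAddCommGroup E] {f : ι → E} (a : ι) (ha : f a ≠ 0)
    (h : ∀ i, i ≠ a → ‖f i‖ ≤ (Fintype.card ι : ℝ)⁻¹ * ‖f a‖) : ∑ i, f i ≠ 0 := by
  have h_card : ((Finset.univ.erase a).card : ℝ) < Fintype.card ι := by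
    exact_mod_cast Finset.card_erase_lt_of_mem (Finset.mem_univ a)
  have h_rest : ‖∑ i ∈ Finset.univ.erase a, f i‖ < ‖f a‖ :=
    calc ‖∑ i ∈ Finset.univ.erase a, f i‖ ≤ ∑ i ∈ Finset.univ.erase a, ‖f i‖ := norm_sum_le _ _
      _ ≤ (Finset.univ.erase a).card * ((Fintype.card ι : ℝ)⁻¹ * ‖f a‖) := by
          rw [← nsmul_eq_mul, ← Finset.sum_const]
          exact Finset.sum_le_sum fun i hi => h i (Finset.ne_of_mem_erase hi)
      _ < ‖f a‖ := by
          rw [← mul_assoc, ← div_eq_mul_inv]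
          exact mul_lt_of_lt_one_left (norm_pos_iff.2 ha)
            ((div_lt_one ((Nat.cast_nonneg _).trans_lt h_card)).2 h_card)
  rw [← Finset.add_sum_erase _ _ (Finset.mem_univ a)]
  exact fun h_zero => h_rest.ne' (by rw [eq_neg_of_add_eq_zero_left h_zero, norm_neg])

theorem eventually_pow_le_mul_pow {c d ε : ℝ} (hc : 0 ≤ c) (hcd : c < d) (hε : 0 < ε) :
    ∀ᶠ l : ℕ in atTop, c ^ l ≤ ε * d ^ l :=
  ((isLittleO_pow_pow_of_lt_left hc hcd).def hε).mono fun l hl => by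
    rwa [Real.norm_of_nonneg (pow_nonneg hc l),
      Real.norm_of_nonneg (pow_nonneg (hc.trans hcd.le) l)] at hl

theorem eventually_norm_trace_pow_le {G : Type*} [One G] [Finite G] {d : ℕ}
    {U : G → Matrix (Fin d) (Fin d) ℂ} (hU : ∀ g, U g ∈ unitary (Matrix (Fin d) (Fin d) ℂ))
    (hU_scalar : ∀ g : G, g ≠ 1 → ¬ ∃ c : ℂ, U g = c • (1 : Matrix (Fin d) (Fin d) ℂ))
    {ε : ℝ} (hε : 0 < ε) : ∀ᶠ l : ℕ in atTop, ∀ g, g ≠ 1 → ‖(U g).trace‖ ^ l ≤ ε * d ^ l :=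
  eventually_all.2 fun g => eventually_imp_distrib_left.2 fun hg => by
    have h_lt := norm_trace_lt_of_mem_unitary (hU g) (hU_scalar g hg)
    rw [Fintype.card_fin] at h_lt
    exact eventually_pow_le_mul_pow (norm_nonneg _) h_lt hε

theorem IsIrred.eq_smul_one_of_commute {G : Type*} [Group G] {n : ℕ}
    {α : G → Matrix (Fin n) (Fin n) ℂ} (hα : IsIrred α) {A : Matrix (Fin n) (Fin n) ℂ}
    (hA : ∀ g, A * α g = α g * A) : ∃ μ : ℂ, A = μ • 1 := by
  have : NeZero n := ⟨hα.1.ne'⟩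
  obtain ⟨μ, hμ⟩ := Module.End.exists_eigenvalue (toLin' A)
  obtain ⟨x, hx⟩ := hμ.exists_hasEigenvector
  have h_inv : ∀ g, ∀ y ∈ Module.End.eigenspace (toLin' A) μ,
      (α g).mulVec y ∈ Module.End.eigenspace (toLin' A) μ := by
    intro g y hy
    rw [Module.End.mem_eigenspace_iff, toLin'_apply] at hy ⊢
    rw [mulVec_mulVec, hA, ← mulVec_mulVec, hy, mulVec_smul]
  have h_top : Module.End.eigenspace (toLin' A) μ = ⊤ :=
    (hα.2 _ h_inv).resolve_left fun h => hx.2 (by simpa [h] using hx.1)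
  refine ⟨μ, toLin'.injective (LinearMap.ext fun y => ?_)⟩
  rw [Module.End.mem_eigenspace_iff.1 (h_top ▸ Submodule.mem_top), map_smul, toLin'_one]
  rfl

theorem containedIn_of_intertwiner {G : Type*} [Group G] {n : ℕ} {m : Type*} [Fintype m]
    [DecidableEq m] {α : G → Matrix (Fin n) (Fin n) ℂ} {V : G → Matrix m m ℂ}
    (hα_irred : IsIrred α) (hα : ∀ g, α g ∈ unitary (Matrix (Fin n) (Fin n) ℂ))
    (hV : ∀ g, V g ∈ unitary (Matrix m m ℂ)) {T : Matrix m (Fin n) ℂ} (hT : T ≠ 0)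
    (hTV : ∀ g, T * α g = V g * T) : ContainedIn α V := by
  have h_comm : ∀ g, Tᴴ * T * α g = α g * (Tᴴ * T) := fun g => by
    have h := congrArg conjTranspose (mul_conjTranspose_eq_of_mul_eq (hV g) (hα g) (hTV g))
    rw [conjTranspose_mul, conjTranspose_mul, conjTranspose_conjTranspose,
      conjTranspose_conjTranspose] at h
    rw [Matrix.mul_assoc, hTV, ← Matrix.mul_assoc, ← h, Matrix.mul_assoc]
  obtain ⟨μ, hμ⟩ := hα_irred.eq_smul_one_of_commute h_comm
  have hμ_nonneg : 0 ≤ μ := by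
    simpa [hμ] using (posSemidef_conjTranspose_mul_self T).diag_nonneg (i := ⟨0, hα_irred.1⟩)
  lift μ to ℝ using (Complex.nonneg_iff.1 hμ_nonneg).2.symm
  have hμ_pos : 0 < μ := (Complex.zero_le_real.1 hμ_nonneg).lt_of_ne fun h =>
    hT <| conjTranspose_mul_self_eq_zero.1 <| by simp [hμ, ← h]
  refine ⟨(√μ : ℂ)⁻¹ • T, ?_, fun g => by rw [Matrix.smul_mul, hTV, Matrix.mul_smul]⟩
  have h_scale : star ((√μ : ℂ)⁻¹) * (√μ : ℂ)⁻¹ * μ = 1 := by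
    rw [Complex.star_def, map_inv₀, Complex.conj_ofReal, ← mul_inv, ← Complex.ofReal_mul,
      Real.mul_self_sqrt hμ_pos.le, inv_mul_cancel₀ (Complex.ofReal_ne_zero.2 hμ_pos.ne')]
  rw [conjTranspose_smul, Matrix.smul_mul, Matrix.mul_smul, smul_smul, hμ, smul_smul, h_scale,
    one_smul]

section ProjectiveRepresentation

variable {G : Type*} [Group G] {m n : Type*} [Fintype m] [DecidableEq m] [Fintype n]
  [DecidableEq n]

/-- `IsProjRep` over an arbitrary finite index type, such as that of `β ⊗ U^{⊗l}`. -/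
structure IsUnitaryProjRep (σ : G → G → ℂ) (V : G → Matrix m m ℂ) : Prop where
  mem_unitary : ∀ g, V g ∈ unitary (Matrix m m ℂ)
  mul_eq : ∀ g h, V g * V h = σ g h • V (g * h)

theorem IsProjRep.isUnitaryProjRep {σ : G → G → ℂ} {k : ℕ} {V : G → Matrix (Fin k) (Fin k) ℂ}
    (hV : IsProjRep σ V) : IsUnitaryProjRep σ V :=
  ⟨hV.1, hV.2⟩

namespace IsUnitaryProjRep

variable {σ : G → G → ℂ} {V : G → Matrix m m ℂ}

theorem map_one (hV : IsUnitaryProjRep σ V) (hσ : σ 1 1 = 1) : V 1 = 1 := by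
  have h := hV.mul_eq 1 1
  rw [hσ, one_smul, one_mul] at h
  calc V 1 = star (V 1) * (V 1 * V 1) := by
        rw [← mul_assoc, Unitary.star_mul_self_of_mem (hV.mem_unitary 1), one_mul]
    _ = 1 := by rw [h, Unitary.star_mul_self_of_mem (hV.mem_unitary 1)]

theorem kronecker (hV : IsUnitaryProjRep σ V) {W : G → Matrix n n ℂ}
    (hW : ∀ g, W g ∈ unitary (Matrix n n ℂ)) (hW_mul : ∀ g h, W (g * h) = W g * W h) :
    IsUnitaryProjRep σ fun g => V g ⊗ₖ W g :=
  ⟨fun g => kronecker_mem_unitary (hV.mem_unitary g) (hW g), fun g h => by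
    rw [← mul_kronecker_mul, hV.mul_eq, hW_mul, smul_kronecker]⟩

end IsUnitaryProjRep

end ProjectiveRepresentation

section Twirl

variable {G : Type*} [Fintype G] {m n : Type*} [Fintype m] [DecidableEq m] [Fintype n]
  [DecidableEq n]

def twirl (V : G → Matrix m m ℂ) (W : G → Matrix n n ℂ) (X : Matrix m n ℂ) : Matrix m n ℂ :=
  ∑ g, V g * X * (W g)ᴴ

def charInner (V : G → Matrix m m ℂ) (W : G → Matrix n n ℂ) : ℂ :=
  ∑ g, (V g).trace * star (W g).trace

theorem twirl_mul [Group G] {σ : G → G → ℂ} (hσ : ∀ g h, ‖σ g h‖ = 1) {V : G → Matrix m m ℂ}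
    {W : G → Matrix n n ℂ} (hV : IsUnitaryProjRep σ V) (hW : IsUnitaryProjRep σ W)
    (X : Matrix m n ℂ) (h : G) : twirl V W X * W h = V h * twirl V W X := by
  have h_term : ∀ g, V h * (V g * X * (W g)ᴴ) * (W h)ᴴ = V (h * g) * X * (W (h * g))ᴴ := by
    intro g
    calc V h * (V g * X * (W g)ᴴ) * (W h)ᴴ = (V h * V g) * X * (W h * W g)ᴴ := by
          simp only [conjTranspose_mul, Matrix.mul_assoc]
      _ = (σ h g * star (σ h g)) • (V (h * g) * X * (W (h * g))ᴴ) := by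
          rw [hV.mul_eq, hW.mul_eq, conjTranspose_smul, Matrix.smul_mul, Matrix.smul_mul,
            Matrix.mul_smul, smul_smul]
      _ = V (h * g) * X * (W (h * g))ᴴ := by
          rw [Complex.star_def, Complex.mul_conj', hσ, Complex.ofReal_one, one_pow, one_smul]
  have h_conj : V h * twirl V W X * (W h)ᴴ = twirl V W X := by
    simp only [twirl, Matrix.mul_sum, Matrix.sum_mul, h_term]
    exact Fintype.sum_equiv (Equiv.mulLeft h) _ _ fun _ => rfl
  calc twirl V W X * W h = V h * twirl V W X * (W h)ᴴ * W h := by rw [h_conj]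
    _ = V h * twirl V W X := by
        rw [Matrix.mul_assoc _ (W h)ᴴ, show (W h)ᴴ * W h = 1 from (hW.mem_unitary h).1,
          Matrix.mul_one]

theorem sum_twirl_single_apply (V : G → Matrix m m ℂ) (W : G → Matrix n n ℂ) :
    ∑ i, ∑ j, twirl V W (single i j 1) i j = charInner V W := by
  have h_entry : ∀ g i j, (V g * single i j (1 : ℂ) * (W g)ᴴ) i j = V g i i * star (W g j j) := by
    intro g i j
    rw [mul_apply, Finset.sum_eq_single j (fun k _ hk => by simp [hk]) (by simp)]
    simp
  simp only [twirl, charInner, Matrix.sum_apply, h_entry, trace, diag, star_sum,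
    Finset.sum_mul_sum]
  rw [eq_comm, Finset.sum_comm]
  exact Finset.sum_congr rfl fun i _ => Finset.sum_comm

theorem exists_intertwiner_ne_zero [Group G] {σ : G → G → ℂ} (hσ : ∀ g h, ‖σ g h‖ = 1)
    {V : G → Matrix m m ℂ} {W : G → Matrix n n ℂ} (hV : IsUnitaryProjRep σ V)
    (hW : IsUnitaryProjRep σ W) (h : charInner V W ≠ 0) :
    ∃ T : Matrix m n ℂ, T ≠ 0 ∧ ∀ g, T * W g = V g * T := by
  obtain ⟨i, j, h_ij⟩ : ∃ i j, twirl V W (single i j 1) ≠ 0 := by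
    by_contra! h_zero
    exact h (by simp [← sum_twirl_single_apply, h_zero])
  exact ⟨_, h_ij, twirl_mul hσ hV hW _⟩

end Twirl

theorem charInner_kronecker_tensorPow_ne_zero {G : Type*} [Group G] [Fintype G] {n₁ n₂ d l : ℕ}
    {α : G → Matrix (Fin n₁) (Fin n₁) ℂ} {β : G → Matrix (Fin n₂) (Fin n₂) ℂ}
    {U : G → Matrix (Fin d) (Fin d) ℂ} (hα : ∀ g, α g ∈ unitary (Matrix (Fin n₁) (Fin n₁) ℂ))
    (hβ : ∀ g, β g ∈ unitary (Matrix (Fin n₂) (Fin n₂) ℂ)) (hα_one : α 1 = 1) (hβ_one : β 1 = 1)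
    (hU_one : U 1 = 1) (hn₁ : 0 < n₁) (hn₂ : 0 < n₂) (hd : 0 < d)
    (hl : ∀ g, g ≠ 1 → ‖(U g).trace‖ ^ l ≤ (Fintype.card G : ℝ)⁻¹ * d ^ l) :
    charInner (fun g => β g ⊗ₖ tensorPow U l g) α ≠ 0 := by
  classical
  have h_one : (β 1 ⊗ₖ tensorPow U l 1).trace * star (α 1).trace =
      ((n₂ * d ^ l * n₁ : ℕ) : ℂ) := by
    simp [trace_kronecker, trace_tensorPow, hα_one, hβ_one, hU_one]
  refine Fintype.sum_ne_zero_of_norm_le_inv_card_mul 1 ?_ fun g hg => ?_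
  · rw [h_one, Nat.cast_ne_zero]
    positivity
  have hα_le := norm_trace_le_of_mem_unitary (hα g)
  have hβ_le := norm_trace_le_of_mem_unitary (hβ g)
  rw [Fintype.card_fin] at hα_le hβ_le
  calc ‖(β g ⊗ₖ tensorPow U l g).trace * star (α g).trace‖
      = ‖(β g).trace‖ * ‖(U g).trace‖ ^ l * ‖(α g).trace‖ := by
        rw [trace_kronecker, trace_tensorPow, norm_mul, norm_mul, norm_pow, norm_star]
    _ ≤ n₂ * ((Fintype.card G : ℝ)⁻¹ * d ^ l) * n₁ := by gcongr; exact hl g hg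
    _ = (Fintype.card G : ℝ)⁻¹ * ‖(β 1 ⊗ₖ tensorPow U l 1).trace * star (α 1).trace‖ := by
        rw [h_one, Complex.norm_natCast]
        push_cast
        ring

/-- There is an `l₀` such that for every `2`-cocycle `σ` of `G`, all irreducible
`σ`-projective unitary representations `α, β` of `G`, and every `l ≥ l₀`,
`α` is contained in `β ⊗ U^{⊗l}`. -/
theorem exists_l0_contained_in_tensor
    {G : Type*} [Group G] [Fintype G]
    (d : ℕ) (hd : 2 ≤ d) (U : G → Matrix (Fin d) (Fin d) ℂ)
    (hU1 : U 1 = 1) (hUmul : ∀ g h, U (g * h) = U g * U h)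
    (hUu : ∀ g, U g ∈ unitary (Matrix (Fin d) (Fin d) ℂ))
    (hUs : ∀ g : G, g ≠ 1 → ¬ ∃ c : ℂ, U g = c • (1 : Matrix (Fin d) (Fin d) ℂ)) :
    ∃ l₀ : ℕ, ∀ σ : G → G → ℂ, IsCocycle σ →
      ∀ (n₁ n₂ : ℕ) (α : G → Matrix (Fin n₁) (Fin n₁) ℂ)
        (β : G → Matrix (Fin n₂) (Fin n₂) ℂ),
        IsProjRep σ α → IsIrred α → IsProjRep σ β → IsIrred β →
        ∀ l : ℕ, l₀ ≤ l →
          ContainedIn α (fun g => β g ⊗ₖ tensorPow U l g) := by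
  obtain ⟨l₀, hl₀⟩ := eventually_atTop.1 <|
    eventually_norm_trace_pow_le hUu hUs (inv_pos.2 (Nat.cast_pos.2 (Fintype.card_pos (α := G))))
  refine ⟨l₀, fun σ hσ n₁ n₂ α β hα hα_irred hβ hβ_irred l hl => ?_⟩
  have hV := hβ.isUnitaryProjRep.kronecker (tensorPow_mem_unitary hUu l) (tensorPow_mul hUmul l)
  have h_char := charInner_kronecker_tensorPow_ne_zero hα.1 hβ.1
    (hα.isUnitaryProjRep.map_one (hσ.2.2.1 1)) (hβ.isUnitaryProjRep.map_one (hσ.2.2.1 1)) hU1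
    hα_irred.1 hβ_irred.1 (by omega) (hl₀ l hl)
  obtain ⟨T, hT, hTV⟩ := exists_intertwiner_ne_zero hσ.1 hV hα.isUnitaryProjRep h_char
  exact containedIn_of_intertwiner hα_irred hα.1 hV.mem_unitary hT hTV
end

section
/- Let H be a complex Hilbert space and let h be a bounded self-adjoint operator on H with 0 ≤ h ≤ 1 (i.e. h is positive and 1 − h is positive). Then for all vectors ξ, η ∈ H: ‖exp(iπh)·ξ − η‖ ≤ (e^π/2)·‖h(ξ+η)‖ + (e^π/2)·‖(1−h)(ξ−η)‖, where exp(iπh) denotes the operator exponential of iπh. -/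
/-!
Write `exp(iπh)ξ - η` as half of `(exp(iπh) - 1)(ξ + η)` plus half of `(exp(iπh) + 1)(ξ - η)`.
Summing the exponential series termwise gives `‖(exp(cA) - 1)v‖ ≤ (e^‖c‖ - 1)‖Av‖` for every
contraction `A`. Apply this to `A = h`, and, since `exp(iπh) = e^{iπ} exp(iπ(h - 1)) =
-exp(iπ(h - 1))`, to `A = h - 1`; both are contractions because `0 ≤ h ≤ 1` in the
C⋆-algebra `B(H)`.
-/

open NormedSpace RCLike Real

theorem ContinuousLinearMap.norm_pow_apply_le {𝕜 E : Type*} [NontriviallyNormedField 𝕜]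
    [SeminormedAddCommGroup E] [NormedSpace 𝕜 E] {A : E →L[𝕜] E} (hA : ‖A‖ ≤ 1) (n : ℕ)
    (v : E) : ‖(A ^ n) v‖ ≤ ‖v‖ := by
  induction n with
  | zero => simp
  | succ n ih =>
    rw [pow_succ']
    exact (A.le_of_opNorm_le hA ((A ^ n) v)).trans (by rw [one_mul]; exact ih)

theorem norm_exp_smul_apply_sub_self_le {𝕜 E : Type*} [RCLike 𝕜] [NormedAddCommGroup E]
    [NormedSpace 𝕜 E] [CompleteSpace E] {A : E →L[𝕜] E} (hA : ‖A‖ ≤ 1) (c : 𝕜) (v : E) :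
    ‖exp (c • A) v - v‖ ≤ (Real.exp ‖c‖ - 1) * ‖A v‖ := by
  have h_series : HasSum (fun n : ℕ => (((n + 1).factorial : 𝕜)⁻¹ • (c • A) ^ (n + 1)) v)
      (exp (c • A) v - v) := by
    have := (exp_series_hasSum_exp' (𝕂 := 𝕜) (c • A)).mapL (ContinuousLinearMap.apply 𝕜 E v)
    rw [← hasSum_nat_add_iff' 1] at this
    simpa using this
  have h_majorant : HasSum (fun n : ℕ => ‖c‖ ^ (n + 1) / (n + 1).factorial * ‖A v‖)
      ((Real.exp ‖c‖ - 1) * ‖A v‖) := by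
    have := expSeries_div_hasSum_exp ‖c‖
    rw [← hasSum_nat_add_iff' 1] at this
    simpa [Real.exp_eq_exp_ℝ] using this.mul_right ‖A v‖
  refine h_series.norm_le_of_bounded h_majorant fun n => ?_
  calc ‖(((n + 1).factorial : 𝕜)⁻¹ • (c • A) ^ (n + 1)) v‖
      = ‖c‖ ^ (n + 1) / (n + 1).factorial * ‖(A ^ n) (A v)‖ := by
        rw [smul_pow, pow_succ A]
        simp only [smul_apply, norm_smul, norm_inv, norm_pow, RCLike.norm_natCast]
        rw [div_eq_inv_mul, mul_assoc]
        rfl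
    _ ≤ ‖c‖ ^ (n + 1) / (n + 1).factorial * ‖A v‖ := by
        gcongr
        exact A.norm_pow_apply_le hA n _

theorem NormedSpace.exp_smul_eq_exp_smul_exp_smul_sub_one {𝕜 𝔸 : Type*} [RCLike 𝕜]
    [NormedRing 𝔸] [NormedAlgebra 𝕜 𝔸] [CompleteSpace 𝔸] (c : 𝕜) (a : 𝔸) :
    exp (c • a) = exp c • exp (c • (a - 1)) := by
  let +nondep : NormedAlgebra ℚ 𝔸 := .restrictScalars ℚ 𝕜 𝔸
  have h_split : c • a = algebraMap 𝕜 𝔸 c + c • (a - 1) := by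
    rw [Algebra.algebraMap_eq_smul_one, ← smul_add, add_sub_cancel]
  rw [h_split, exp_add_of_commute (Algebra.commutes c _), ← algebraMap_exp_comm,
    ← Algebra.smul_def]

theorem norm_apply_sub_le_half_add_half {E F : Type*} [SeminormedAddCommGroup E]
    [NormedSpace ℝ E] [FunLike F E E] [AddMonoidHomClass F E E] (U : F) (ξ η : E) :
    ‖U ξ - η‖ ≤ ‖U (ξ + η) - (ξ + η)‖ / 2 + ‖U (ξ - η) + (ξ - η)‖ / 2 := by
  have h_decomp : U ξ - η =
      (2 : ℝ)⁻¹ • (U (ξ + η) - (ξ + η)) + (2 : ℝ)⁻¹ • (U (ξ - η) + (ξ - η)) := by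
    simp only [map_add, map_sub]
    module
  rw [h_decomp]
  refine (norm_add_le _ _).trans_eq ?_
  simp only [norm_smul, Real.norm_eq_abs, abs_inv, abs_two]
  ring

namespace ContinuousLinearMap

variable {𝕜 E : Type*} [RCLike 𝕜] [NormedAddCommGroup E] [InnerProductSpace 𝕜 E]
  [CompleteSpace E] {T : E →L[𝕜] E}

theorem nonneg_of_re_inner_apply_nonneg (hT : IsSelfAdjoint T)
    (h : ∀ x, 0 ≤ re (inner 𝕜 x (T x))) : 0 ≤ T :=
  (nonneg_iff_isPositive T).2 <| isPositive_def'.2 ⟨hT, fun x => by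
    simpa [reApplyInnerSelf, ← inner_re_symm] using h x⟩

theorem le_one_of_re_inner_apply_le (hT : IsSelfAdjoint T)
    (h : ∀ x, re (inner 𝕜 x (T x)) ≤ ‖x‖ ^ 2) : T ≤ 1 := by
  refine (le_def T 1).2 <| (nonneg_iff_isPositive _).1 <|
    nonneg_of_re_inner_apply_nonneg ((IsSelfAdjoint.one _).sub hT) fun x => ?_
  simpa [inner_sub_right, inner_self_eq_norm_sq] using h x

end ContinuousLinearMap

/-- For a bounded self-adjoint operator `h` on a Hilbert space with `0 ≤ h ≤ 1` and all
vectors `ξ, η`: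
`‖exp(iπh)ξ - η‖ ≤ (e^π/2)‖h(ξ+η)‖ + (e^π/2)‖(1-h)(ξ-η)‖`. -/
theorem norm_exp_smul_sub_le
    {H : Type*} [NormedAddCommGroup H] [InnerProductSpace ℂ H] [CompleteSpace H]
    (h : H →L[ℂ] H) (hsa : IsSelfAdjoint h)
    (hpos : ∀ x : H, 0 ≤ ((inner ℂ x (h x) : ℂ)).re)
    (hle : ∀ x : H, ((inner ℂ x (h x) : ℂ)).re ≤ ‖x‖ ^ 2)
    (ξ η : H) :
    ‖NormedSpace.exp ((Complex.I * Real.pi) • h) ξ - η‖ ≤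
      Real.exp Real.pi / 2 * ‖h (ξ + η)‖ +
        Real.exp Real.pi / 2 * ‖(1 - h) (ξ - η)‖ := by
  set c : ℂ := Complex.I * Real.pi with hc_def
  have hc_norm : ‖c‖ = π := by simp [c, abs_of_nonneg Real.pi_pos.le]
  have h_exp_c : exp c = -1 := by
    rw [← Complex.exp_eq_exp_ℂ, hc_def, mul_comm, Complex.exp_pi_mul_I]
  have h_nonneg : 0 ≤ h := ContinuousLinearMap.nonneg_of_re_inner_apply_nonneg hsa hpos
  have h_le_one : h ≤ 1 := ContinuousLinearMap.le_one_of_re_inner_apply_le hsa hle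
  have h_contr : ∀ A : H →L[ℂ] H, ‖A‖ ≤ 1 → ∀ v, ‖exp (c • A) v - v‖ ≤ Real.exp π * ‖A v‖ := by
    intro A hA v
    refine (norm_exp_smul_apply_sub_self_le hA c v).trans ?_
    rw [hc_norm]
    gcongr
    linarith
  have h_minus : ∀ v, ‖exp (c • h) v - v‖ ≤ Real.exp π * ‖h v‖ :=
    h_contr h ((CStarAlgebra.norm_le_one_iff_of_nonneg h).2 h_le_one)
  have h_plus : ∀ v, ‖exp (c • h) v + v‖ ≤ Real.exp π * ‖(1 - h) v‖ := by
    intro v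
    have h_norm : ‖h - 1‖ ≤ 1 := by
      rw [norm_sub_rev, CStarAlgebra.norm_le_one_iff_of_nonneg _ (sub_nonneg.2 h_le_one)]
      exact sub_le_self 1 h_nonneg
    rw [exp_smul_eq_exp_smul_exp_smul_sub_one, h_exp_c, neg_one_smul, neg_apply,
      neg_add_eq_sub, norm_sub_rev, ← neg_sub h 1, neg_apply, norm_neg]
    exact h_contr (h - 1) h_norm v
  calc ‖exp (c • h) ξ - η‖
      ≤ ‖exp (c • h) (ξ + η) - (ξ + η)‖ / 2 + ‖exp (c • h) (ξ - η) + (ξ - η)‖ / 2 :=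
        norm_apply_sub_le_half_add_half _ ξ η
    _ ≤ Real.exp π * ‖h (ξ + η)‖ / 2 + Real.exp π * ‖(1 - h) (ξ - η)‖ / 2 := by
        gcongr
        exacts [h_minus _, h_plus _]
    _ = _ := by ring
end
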